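/- For every instance of the Budget Optimization problem there exists a single-bid strategy A with spend(A) ≤ B and traffic(A) ≥ (1/2)·OPT, where OPT is the per-query optimum; in particular the best single-bid strategy is a 1/2-approximation to the optimum of the Budget Optimization problem. -/

import Mathlib

open MeasureTheory

/-!
Budget Optimization instances.  A query landscape for query `q` has `S q + 1`
positions with click-through rates `α q 0 ≥ … ≥ α q (S q) = 0` and competing
bids `b q 0 ≥ … ≥ b q (S q) = 0`.  Keywords are `Fin nK`, queries `Fin nQ`,
and `nbrs q` is the (nonempty) set of keywords matching query `q`.
-/

noncomputable def landPos (n : ℕ) (b : Fin (n + 1) → ℝ) (x : ℝ) : Fin (n + 1) :=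
  if h : (Finset.univ.filter (fun i => b i ≤ x)).Nonempty
  then (Finset.univ.filter (fun i => b i ≤ x)).min' h
  else Fin.last n

noncomputable def landClicks (n : ℕ) (α b : Fin (n + 1) → ℝ) (x : ℝ) : ℝ :=
  α (landPos n b x)

noncomputable def landCost (n : ℕ) (α b : Fin (n + 1) → ℝ) (x : ℝ) : ℝ :=
  α (landPos n b x) * b (landPos n b x)

/-- An instance of the Budget Optimization problem. -/
structure BOInstance where
  nK : ℕ
  nQ : ℕ
  nbrs : Fin nQ → Finset (Fin nK)
  nbrs_nonempty : ∀ q, (nbrs q).Nonempty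
  S : Fin nQ → ℕ
  α : (q : Fin nQ) → Fin (S q + 1) → ℝ
  b : (q : Fin nQ) → Fin (S q + 1) → ℝ
  α_anti : ∀ q, Antitone (α q)
  b_anti : ∀ q, Antitone (b q)
  α_last : ∀ q, α q (Fin.last (S q)) = 0
  b_last : ∀ q, b q (Fin.last (S q)) = 0
  budget : ℝ
  budget_nonneg : 0 ≤ budget

/-- The effective bid on query `q` induced by the keyword-bid vector `v`. -/
noncomputable def effBid (I : BOInstance) (v : Fin I.nK → ℝ) (q : Fin I.nQ) : ℝ :=
  (I.nbrs q).sup' (I.nbrs_nonempty q) v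

noncomputable def spendVec (I : BOInstance) (v : Fin I.nK → ℝ) : ℝ :=
  ∑ q, landCost (I.S q) (I.α q) (I.b q) (effBid I v q)

noncomputable def trafficVec (I : BOInstance) (v : Fin I.nK → ℝ) : ℝ :=
  ∑ q, landClicks (I.S q) (I.α q) (I.b q) (effBid I v q)

/-- Expected spend of a distribution over keyword-bid vectors. -/
noncomputable def spendD (I : BOInstance) (μ : Measure (Fin I.nK → ℝ)) : ℝ :=
  ∫ v, spendVec I v ∂μ

/-- Expected traffic of a distribution over keyword-bid vectors. -/
noncomputable def trafficD (I : BOInstance) (μ : Measure (Fin I.nK → ℝ)) : ℝ :=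
  ∫ v, trafficVec I v ∂μ

/-- A strategy: a probability distribution over nonnegative keyword-bid vectors. -/
def IsStrategy (I : BOInstance) (μ : Measure (Fin I.nK → ℝ)) : Prop :=
  IsProbabilityMeasure μ ∧ ∀ᵐ v ∂μ, ∀ k, 0 ≤ v k

/-- A uniform strategy: supported on constant (uniform) bid vectors. -/
def IsUniform (I : BOInstance) (μ : Measure (Fin I.nK → ℝ)) : Prop :=
  IsStrategy I μ ∧ ∀ᵐ v ∂μ, ∃ x : ℝ, 0 ≤ x ∧ v = fun _ => x

/-- A two-bid strategy: a uniform strategy supported on at most two bid vectors. -/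
def IsTwoBid (I : BOInstance) (μ : Measure (Fin I.nK → ℝ)) : Prop :=
  ∃ x y l : ℝ, 0 ≤ x ∧ 0 ≤ y ∧ 0 ≤ l ∧ l ≤ 1 ∧
    μ = ENNReal.ofReal l • Measure.dirac (fun _ => x) +
        ENNReal.ofReal (1 - l) • Measure.dirac (fun _ => y)

/-- A single-bid strategy: a uniform strategy supported on at most one nonzero
bid vector together possibly with the zero vector. -/
def IsSingleBid (I : BOInstance) (μ : Measure (Fin I.nK → ℝ)) : Prop :=
  ∃ x l : ℝ, 0 ≤ x ∧ 0 ≤ l ∧ l ≤ 1 ∧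
    μ = ENNReal.ofReal l • Measure.dirac (fun _ => x) +
        ENNReal.ofReal (1 - l) • Measure.dirac (fun _ => (0 : ℝ))


/-!
For a bid `x > 0` and any bid `y` on a query, `clicks y ≤ clicks x + cost y / x`: either the
slot won by `y` is also won by `x`, or each of its clicks costs more than `x`. Averaging over
any feasible per-query strategy gives `OPT ≤ T x + B / x`, where `T x` is the traffic of the
uniform bid `x`, so for `x = 2B / OPT` we get `T x ≥ OPT / 2` and `B / x = OPT / 2`. Since the
uniform bid `x` spends at most `x · T x`, bidding `x` with probability `min 1 (B / spend x)`
and `0` otherwise stays within budget and earns at least `min (T x) (B / x) = OPT / 2`.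
-/

lemma Antitone.nonneg_of_apply_last_eq_zero {β : Type*} [Preorder β] [Zero β] {n : ℕ}
    {f : Fin (n + 1) → β} (hf : Antitone f) (h : f (Fin.last n) = 0) (i : Fin (n + 1)) :
    0 ≤ f i :=
  h ▸ hf (Fin.le_last i)

section Landscape

variable {n : ℕ} {α b : Fin (n + 1) → ℝ}

lemma landPos_le_of_le {x : ℝ} {i : Fin (n + 1)} (h : b i ≤ x) : landPos n b x ≤ i := by
  have hi : i ∈ Finset.univ.filter (fun j => b j ≤ x) := by simp [h]
  rw [landPos, dif_pos ⟨i, hi⟩]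
  exact Finset.min'_le _ _ hi

lemma apply_landPos_le_of_nonempty {x : ℝ}
    (hne : (Finset.univ.filter (fun i => b i ≤ x)).Nonempty) : b (landPos n b x) ≤ x := by
  rw [landPos, dif_pos hne]
  exact (Finset.mem_filter.mp (Finset.min'_mem _ hne)).2

lemma apply_landPos_le (hb0 : b (Fin.last n) = 0) {x : ℝ} (hx : 0 ≤ x) :
    b (landPos n b x) ≤ x :=
  apply_landPos_le_of_nonempty ⟨Fin.last n, by simp [hb0, hx]⟩

lemma landPos_anti : Antitone (landPos n b) := by
  intro x y hxy
  by_cases hne : (Finset.univ.filter (fun i => b i ≤ x)).Nonempty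
  · exact landPos_le_of_le ((apply_landPos_le_of_nonempty hne).trans hxy)
  · rw [show landPos n b x = Fin.last n from dif_neg hne]
    exact Fin.le_last _

lemma measurable_landClicks : Measurable (landClicks n α b) :=
  (Measurable.of_discrete (f := α)).comp landPos_anti.measurable

lemma measurable_landCost : Measurable (landCost n α b) :=
  (Measurable.of_discrete (f := fun i => α i * b i)).comp landPos_anti.measurable

lemma norm_landClicks_le (x : ℝ) : ‖landClicks n α b x‖ ≤ ‖α‖ :=
  norm_le_pi_norm α _

lemma norm_landCost_le (x : ℝ) : ‖landCost n α b x‖ ≤ ‖α‖ * ‖b‖ :=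
  norm_mul_le_of_le (norm_le_pi_norm α _) (norm_le_pi_norm b _)

lemma landCost_zero (hb : Antitone b) (hb0 : b (Fin.last n) = 0) : landCost n α b 0 = 0 := by
  have hb_zero : b (landPos n b 0) = 0 :=
    le_antisymm (apply_landPos_le hb0 le_rfl) (hb.nonneg_of_apply_last_eq_zero hb0 _)
  rw [landCost, hb_zero, mul_zero]

variable (hα : Antitone α) (hα0 : α (Fin.last n) = 0)
include hα hα0

lemma landClicks_nonneg (x : ℝ) : 0 ≤ landClicks n α b x :=
  hα.nonneg_of_apply_last_eq_zero hα0 _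

lemma landCost_nonneg (hb : Antitone b) (hb0 : b (Fin.last n) = 0) (x : ℝ) :
    0 ≤ landCost n α b x :=
  mul_nonneg (landClicks_nonneg hα hα0 x) (hb.nonneg_of_apply_last_eq_zero hb0 _)

lemma landCost_le_mul_landClicks (hb0 : b (Fin.last n) = 0) {x : ℝ} (hx : 0 ≤ x) :
    landCost n α b x ≤ x * landClicks n α b x := by
  rw [landCost, mul_comm x]
  exact mul_le_mul_of_nonneg_left (apply_landPos_le hb0 hx) (landClicks_nonneg hα hα0 x)

lemma landClicks_le_add_landCost_div (hb : Antitone b) (hb0 : b (Fin.last n) = 0) {x : ℝ}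
    (hx : 0 < x) (y : ℝ) :
    landClicks n α b y ≤ landClicks n α b x + landCost n α b y / x := by
  rcases le_or_gt (b (landPos n b y)) x with hwon | hdear
  · have hclicks : landClicks n α b y ≤ landClicks n α b x := hα (landPos_le_of_le hwon)
    have hcost : 0 ≤ landCost n α b y / x := div_nonneg (landCost_nonneg hα hα0 hb hb0 y) hx.le
    linarith
  · have hclicks : landClicks n α b y ≤ landCost n α b y / x := by
      rw [le_div_iff₀ hx]
      exact mul_le_mul_of_nonneg_left hdear.le (landClicks_nonneg hα hα0 y)
    linarith [landClicks_nonneg hα hα0 (b := b) x]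

lemma landClicks_le_of_landCost_eq_zero {y : ℝ} (h : landCost n α b y = 0) :
    landClicks n α b y ≤ landClicks n α b 0 := by
  rcases mul_eq_zero.mp h with hα_zero | hb_zero
  · exact hα_zero.trans_le (landClicks_nonneg hα hα0 0)
  · exact hα (landPos_le_of_le hb_zero.le)

end Landscape

lemma integrable_sum_comp_eval {ι : Type*} [Fintype ι] {μ : Measure (ι → ℝ)} [IsFiniteMeasure μ]
    {g : ι → ℝ → ℝ} (hg : ∀ i, Measurable (g i)) (C : ι → ℝ) (hC : ∀ i x, ‖g i x‖ ≤ C i) :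
    Integrable (fun β => ∑ i, g i (β i)) μ :=
  integrable_finsetSum _ fun i _ =>
    .of_bound ((hg i).comp (measurable_pi_apply i)).aestronglyMeasurable (C i)
      (ae_of_all _ fun β => hC i (β i))

lemma integral_two_dirac {δ : Type*} [MeasurableSpace δ] [MeasurableSingletonClass δ]
    (f : δ → ℝ) (a c : δ) {p q : ℝ} (hp : 0 ≤ p) (hq : 0 ≤ q) :
    ∫ v, f v ∂(ENNReal.ofReal p • Measure.dirac a + ENNReal.ofReal q • Measure.dirac c) =
      p * f a + q * f c := by
  have integrable_dirac (z : δ) : Integrable f (Measure.dirac z) :=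
    (integrable_const (f z)).congr (ae_eq_dirac f).symm
  rw [integral_add_measure ((integrable_dirac a).smul_measure ENNReal.ofReal_ne_top)
      ((integrable_dirac c).smul_measure ENNReal.ofReal_ne_top),
    integral_smul_measure, integral_smul_measure, integral_dirac, integral_dirac,
    ENNReal.toReal_ofReal hp, ENNReal.toReal_ofReal hq, smul_eq_mul, smul_eq_mul]

lemma exists_mul_le_and_min_le_mul {B S T x : ℝ} (hB : 0 ≤ B) (hx : 0 < x) (hS : S ≤ x * T) :
    ∃ l, 0 ≤ l ∧ l ≤ 1 ∧ l * S ≤ B ∧ min T (B / x) ≤ l * T := by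
  rcases le_or_gt S B with hSB | hBS
  · exact ⟨1, zero_le_one, le_rfl, by linarith, by simp⟩
  · have hS0 : 0 < S := hB.trans_lt hBS
    refine ⟨B / S, by positivity, (div_le_one hS0).2 hBS.le, (div_mul_cancel₀ _ hS0.ne').le,
      (min_le_right _ _).trans ?_⟩
    rw [div_mul_eq_mul_div, div_le_div_iff₀ hx hS0]
    linarith [mul_le_mul_of_nonneg_left hS hB]

namespace BOInstance

variable (I : BOInstance)

noncomputable def clicks (β : Fin I.nQ → ℝ) : ℝ :=
  ∑ q, landClicks (I.S q) (I.α q) (I.b q) (β q)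

noncomputable def cost (β : Fin I.nQ → ℝ) : ℝ :=
  ∑ q, landCost (I.S q) (I.α q) (I.b q) (β q)

/-- Per-query bids are allowed to be negative here: a negative bid wins no slot, exactly
like the bid `0`, so this is the per-query optimum `OPT`. -/
noncomputable def perQueryOpt : ℝ :=
  sSup ((fun ν => ∫ β, I.clicks β ∂ν) ''
    {ν : Measure (Fin I.nQ → ℝ) | IsProbabilityMeasure ν ∧ ∫ β, I.cost β ∂ν ≤ I.budget})

noncomputable def singleBid (x l : ℝ) : Measure (Fin I.nK → ℝ) :=
  ENNReal.ofReal l • Measure.dirac (fun _ => x) +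
    ENNReal.ofReal (1 - l) • Measure.dirac (fun _ => (0 : ℝ))

lemma clicks_nonneg (β : Fin I.nQ → ℝ) : 0 ≤ I.clicks β :=
  Finset.sum_nonneg fun q _ => landClicks_nonneg (I.α_anti q) (I.α_last q) _

lemma cost_nonneg (β : Fin I.nQ → ℝ) : 0 ≤ I.cost β :=
  Finset.sum_nonneg fun q _ =>
    landCost_nonneg (I.α_anti q) (I.α_last q) (I.b_anti q) (I.b_last q) _

lemma cost_zero : I.cost (fun _ => 0) = 0 :=
  Finset.sum_eq_zero fun q _ => landCost_zero (I.b_anti q) (I.b_last q)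

lemma cost_const_le {x : ℝ} (hx : 0 ≤ x) : I.cost (fun _ => x) ≤ x * I.clicks (fun _ => x) := by
  rw [clicks, Finset.mul_sum]
  exact Finset.sum_le_sum fun q _ =>
    landCost_le_mul_landClicks (I.α_anti q) (I.α_last q) (I.b_last q) hx

lemma clicks_le_add_cost_div {x : ℝ} (hx : 0 < x) (β : Fin I.nQ → ℝ) :
    I.clicks β ≤ I.clicks (fun _ => x) + I.cost β / x := by
  rw [clicks, clicks, cost, Finset.sum_div, ← Finset.sum_add_distrib]
  exact Finset.sum_le_sum fun q _ =>
    landClicks_le_add_landCost_div (I.α_anti q) (I.α_last q) (I.b_anti q) (I.b_last q) hx _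

lemma clicks_le_of_cost_eq_zero {β : Fin I.nQ → ℝ} (h : I.cost β = 0) :
    I.clicks β ≤ I.clicks (fun _ => 0) := by
  have hq := (Finset.sum_eq_zero_iff_of_nonneg fun q _ =>
    landCost_nonneg (I.α_anti q) (I.α_last q) (I.b_anti q) (I.b_last q) (β q)).mp h
  exact Finset.sum_le_sum fun q _ =>
    landClicks_le_of_landCost_eq_zero (I.α_anti q) (I.α_last q) (hq q (Finset.mem_univ q))

lemma integrable_clicks (ν : Measure (Fin I.nQ → ℝ)) [IsFiniteMeasure ν] :
    Integrable I.clicks ν :=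
  integrable_sum_comp_eval (fun _ => measurable_landClicks) _ fun _ => norm_landClicks_le

lemma integrable_cost (ν : Measure (Fin I.nQ → ℝ)) [IsFiniteMeasure ν] :
    Integrable I.cost ν :=
  integrable_sum_comp_eval (fun _ => measurable_landCost) _ fun _ => norm_landCost_le

variable {I} {ν : Measure (Fin I.nQ → ℝ)}

lemma integral_clicks_le_add_div [IsProbabilityMeasure ν] (hcost : ∫ β, I.cost β ∂ν ≤ I.budget)
    {x : ℝ} (hx : 0 < x) : ∫ β, I.clicks β ∂ν ≤ I.clicks (fun _ => x) + I.budget / x := by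
  have hbound : ∫ β, I.clicks β ∂ν ≤ ∫ β, I.clicks (fun _ => x) + I.cost β / x ∂ν :=
    integral_mono (I.integrable_clicks ν)
      ((integrable_const _).add ((I.integrable_cost ν).div_const x)) (I.clicks_le_add_cost_div hx)
  rw [integral_add (integrable_const _) ((I.integrable_cost ν).div_const x), integral_const,
    integral_div, probReal_univ, one_smul] at hbound
  have hdiv : (∫ β, I.cost β ∂ν) / x ≤ I.budget / x := by gcongr
  linarith

lemma integral_clicks_le_of_budget_eq_zero [IsProbabilityMeasure ν] (hB : I.budget = 0)
    (hcost : ∫ β, I.cost β ∂ν ≤ I.budget) : ∫ β, I.clicks β ∂ν ≤ I.clicks (fun _ => 0) := by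
  have hcost_ae : I.cost =ᵐ[ν] 0 :=
    (integral_eq_zero_iff_of_nonneg I.cost_nonneg (I.integrable_cost ν)).mp
      (le_antisymm (hB ▸ hcost) (integral_nonneg I.cost_nonneg))
  calc ∫ β, I.clicks β ∂ν ≤ ∫ _, I.clicks (fun _ => 0) ∂ν :=
        integral_mono_ae (I.integrable_clicks ν) (integrable_const _)
          (hcost_ae.mono fun _ => I.clicks_le_of_cost_eq_zero)
    _ = I.clicks (fun _ => 0) := by simp

lemma le_perQueryOpt (hν : IsProbabilityMeasure ν) (hcost : ∫ β, I.cost β ∂ν ≤ I.budget) :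
    ∫ β, I.clicks β ∂ν ≤ I.perQueryOpt :=
  le_csSup ⟨_, Set.forall_mem_image.2 fun _ ⟨_, hcost'⟩ =>
    integral_clicks_le_add_div hcost' zero_lt_one⟩ ⟨ν, ⟨hν, hcost⟩, rfl⟩

lemma perQueryOpt_le {r : ℝ}
    (h : ∀ ν : Measure (Fin I.nQ → ℝ), IsProbabilityMeasure ν →
      ∫ β, I.cost β ∂ν ≤ I.budget → ∫ β, I.clicks β ∂ν ≤ r) :
    I.perQueryOpt ≤ r := by
  have hzero : ∫ β, I.cost β ∂Measure.dirac (fun _ => 0) ≤ I.budget := by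
    rw [integral_dirac, cost_zero]
    exact I.budget_nonneg
  exact csSup_le ⟨_, _, ⟨inferInstance, hzero⟩, rfl⟩
    (Set.forall_mem_image.2 fun ν ⟨hν, hcost⟩ => h ν hν hcost)

lemma perQueryOpt_le_add_div {x : ℝ} (hx : 0 < x) :
    I.perQueryOpt ≤ I.clicks (fun _ => x) + I.budget / x :=
  perQueryOpt_le fun _ _ hcost => integral_clicks_le_add_div hcost hx

lemma perQueryOpt_le_of_budget_eq_zero (hB : I.budget = 0) :
    I.perQueryOpt ≤ I.clicks (fun _ => 0) :=
  perQueryOpt_le fun _ _ hcost => integral_clicks_le_of_budget_eq_zero hB hcost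

lemma spendVec_const (x : ℝ) : spendVec I (fun _ => x) = I.cost (fun _ => x) := by
  simp only [spendVec, effBid, Finset.sup'_const]
  rfl

lemma trafficVec_const (x : ℝ) : trafficVec I (fun _ => x) = I.clicks (fun _ => x) := by
  simp only [trafficVec, effBid, Finset.sup'_const]
  rfl

lemma spendD_singleBid {x l : ℝ} (hl0 : 0 ≤ l) (hl1 : l ≤ 1) :
    spendD I (I.singleBid x l) = l * I.cost (fun _ => x) := by
  rw [spendD, singleBid, integral_two_dirac _ _ _ hl0 (sub_nonneg.2 hl1), spendVec_const,
    spendVec_const, cost_zero, mul_zero, add_zero]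

lemma trafficD_singleBid {x l : ℝ} (hl0 : 0 ≤ l) (hl1 : l ≤ 1) :
    trafficD I (I.singleBid x l) =
      l * I.clicks (fun _ => x) + (1 - l) * I.clicks (fun _ => 0) := by
  rw [trafficD, singleBid, integral_two_dirac _ _ _ hl0 (sub_nonneg.2 hl1), trafficVec_const,
    trafficVec_const]

end BOInstance

/-- There is a single-bid strategy within budget whose traffic is at least half
of the per-query optimum: for every random tuple of nonnegative per-query bids
whose expected total cost is within budget, the strategy obtains at least half
of its expected total clicks. -/
theorem single_bid_half_approximation (I : BOInstance) :
    ∃ μ : Measure (Fin I.nK → ℝ),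
      IsSingleBid I μ ∧ spendD I μ ≤ I.budget ∧
      ∀ ν : Measure (Fin I.nQ → ℝ), IsProbabilityMeasure ν →
        (∀ᵐ β ∂ν, ∀ q, 0 ≤ β q) →
        (∫ β, ∑ q, landCost (I.S q) (I.α q) (I.b q) (β q) ∂ν) ≤ I.budget →
        (1 / 2) * (∫ β, ∑ q, landClicks (I.S q) (I.α q) (I.b q) (β q) ∂ν) ≤
          trafficD I μ := by
  set V := I.perQueryOpt
  suffices h : ∃ x l, 0 ≤ x ∧ 0 ≤ l ∧ l ≤ 1 ∧ l * I.cost (fun _ => x) ≤ I.budget ∧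
      V / 2 ≤ l * I.clicks (fun _ => x) + (1 - l) * I.clicks (fun _ => 0) by
    obtain ⟨x, l, hx, hl0, hl1, hspend, htraffic⟩ := h
    refine ⟨I.singleBid x l, ⟨x, l, hx, hl0, hl1, rfl⟩, by rwa [I.spendD_singleBid hl0 hl1],
      fun ν hν _ hcost => ?_⟩
    change 1 / 2 * ∫ β, I.clicks β ∂ν ≤ _
    rw [I.trafficD_singleBid hl0 hl1]
    linarith [I.le_perQueryOpt hν hcost]
  have hT0 := I.clicks_nonneg (fun _ => 0)
  by_cases hzero : V ≤ 2 * I.clicks (fun _ => 0)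
  · exact ⟨0, 0, le_rfl, le_rfl, zero_le_one, by simp [I.budget_nonneg], by linarith⟩
  have hB : 0 < I.budget := I.budget_nonneg.lt_of_ne fun hB =>
    hzero (by linarith [I.perQueryOpt_le_of_budget_eq_zero hB.symm])
  have hV : 0 < V := by linarith
  set x := 2 * I.budget / V with hx_def
  have hx : 0 < x := by positivity
  have hBx : I.budget / x = V / 2 := by rw [hx_def]; field_simp
  obtain ⟨l, hl0, hl1, hspend, hmin⟩ :=
    exists_mul_le_and_min_le_mul I.budget_nonneg hx (I.cost_const_le hx.le)
  have hhalf : V / 2 ≤ min (I.clicks (fun _ => x)) (I.budget / x) :=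
    le_min (by linarith [I.perQueryOpt_le_add_div hx]) hBx.ge
  exact ⟨x, l, hx.le, hl0, hl1, hspend, by linarith [mul_nonneg (sub_nonneg.2 hl1) hT0]⟩
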